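/- arXiv:1106.0491 — 3 statements merged into one kernel-verified Lean document; each statement's English description precedes it below -/
import Mathlib

section
/- Let μ be a finite measure on ℝ≥0 (the spectral measure dE_λ(f)) and for s ≥ 0 set G(s) = ∫₀^∞ λ e^{-2λs} dμ(λ). Suppose there exist constants C > 0 and α > 0 such that G(t) ≤ C e^{-2αt} for all t ≥ 0, and G(0) < ∞. Then G(s) ≤ e^{-2αs} G(0) for all s ≥ 0. -/
/-!
Hölder's inequality in the form `∫ f^θ g^(1-θ) ≤ (∫ f)^θ (∫ g)^(1-θ)` shows that
`G s = ∫ l e^{-2ls} dμ` is log-convex on `[0, ∞)`, so with `θ = s / t` we get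
`G s ≤ G t ^ (s/t) * G 0 ^ (1 - s/t) ≤ C ^ (s/t) * e^{-2αs} * G 0 ^ (1 - s/t)`.
Letting `t → ∞` sends `s / t → 0` and the right-hand side to `e^{-2αs} * G 0`.
-/

open MeasureTheory Filter Topology Real

theorem integral_rpow_mul_rpow_le {α : Type*} [MeasurableSpace α] {μ : Measure α}
    {f g : α → ℝ} (hf : 0 ≤ᵐ[μ] f) (hg : 0 ≤ᵐ[μ] g) (hfi : Integrable f μ) (hgi : Integrable g μ)
    {p q : ℝ} (hp : 0 ≤ p) (hq : 0 ≤ q) (hpq : p + q = 1) :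
    ∫ a, f a ^ p * g a ^ q ∂μ ≤ (∫ a, f a ∂μ) ^ p * (∫ a, g a ∂μ) ^ q := by
  have hofReal : ∀ᵐ a ∂μ, ENNReal.ofReal (f a ^ p * g a ^ q)
      = ENNReal.ofReal (f a) ^ p * ENNReal.ofReal (g a) ^ q := by
    filter_upwards [hf, hg] with a hfa hga
    rw [ENNReal.ofReal_mul (Real.rpow_nonneg hfa p), ENNReal.ofReal_rpow_of_nonneg hfa hp,
      ENNReal.ofReal_rpow_of_nonneg hga hq]
  have hfgm : AEStronglyMeasurable (fun a => f a ^ p * g a ^ q) μ :=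
    ((hfi.aemeasurable.pow_const p).mul (hgi.aemeasurable.pow_const q)).aestronglyMeasurable
  have hfg : 0 ≤ᵐ[μ] fun a => f a ^ p * g a ^ q := by
    filter_upwards [hf, hg] with a hfa hga
    exact mul_nonneg (Real.rpow_nonneg hfa p) (Real.rpow_nonneg hga q)
  rw [integral_eq_lintegral_of_nonneg_ae hfg hfgm, integral_eq_lintegral_of_nonneg_ae hf
    hfi.aestronglyMeasurable, integral_eq_lintegral_of_nonneg_ae hg hgi.aestronglyMeasurable,
    ENNReal.toReal_rpow, ENNReal.toReal_rpow, ← ENNReal.toReal_mul, lintegral_congr_ae hofReal]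
  refine ENNReal.toReal_mono ?_ (ENNReal.lintegral_mul_norm_pow_le
    hfi.aemeasurable.ennreal_ofReal hgi.aemeasurable.ennreal_ofReal hp hq hpq)
  exact ENNReal.mul_ne_top (ENNReal.rpow_ne_top_of_nonneg hp hfi.lintegral_lt_top.ne)
    (ENNReal.rpow_ne_top_of_nonneg hq hgi.lintegral_lt_top.ne)

section SpectralEnergy

variable {μ : Measure ℝ}

theorem integrable_mul_exp_neg (hμ : ∀ᵐ l ∂μ, 0 ≤ l) (hi : Integrable (fun l : ℝ => l) μ)
    {t : ℝ} (ht : 0 ≤ t) : Integrable (fun l => l * exp (-2 * l * t)) μ := by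
  refine hi.norm.mono' (by fun_prop) ?_
  filter_upwards [hμ] with l hl
  have : exp (-2 * l * t) ≤ 1 := exp_le_one_iff.2 (by nlinarith)
  rw [norm_mul, norm_of_nonneg (exp_nonneg _)]
  exact mul_le_of_le_one_right (norm_nonneg l) this

theorem integral_mul_exp_neg_nonneg (hμ : ∀ᵐ l ∂μ, 0 ≤ l) (t : ℝ) :
    0 ≤ ∫ l, l * exp (-2 * l * t) ∂μ :=
  integral_nonneg_of_ae <| hμ.mono fun _ hl => mul_nonneg hl (exp_nonneg _)

theorem mul_exp_neg_convex_comb_eq {l : ℝ} (hl : 0 ≤ l) {θ : ℝ} (t u : ℝ) :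
    l * exp (-2 * l * (θ * t + (1 - θ) * u))
      = (l * exp (-2 * l * t)) ^ θ * (l * exp (-2 * l * u)) ^ (1 - θ) := by
  rw [mul_rpow hl (exp_nonneg _), mul_rpow hl (exp_nonneg _), ← exp_mul, ← exp_mul,
    mul_mul_mul_comm, ← rpow_add' hl (by simp), add_sub_cancel, rpow_one, ← exp_add]
  ring_nf

theorem integral_mul_exp_neg_convex_comb_le (hμ : ∀ᵐ l ∂μ, 0 ≤ l)
    (hi : Integrable (fun l : ℝ => l) μ) {θ : ℝ} (hθ₀ : 0 ≤ θ) (hθ₁ : θ ≤ 1) {t u : ℝ}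
    (ht : 0 ≤ t) (hu : 0 ≤ u) :
    ∫ l, l * exp (-2 * l * (θ * t + (1 - θ) * u)) ∂μ
      ≤ (∫ l, l * exp (-2 * l * t) ∂μ) ^ θ * (∫ l, l * exp (-2 * l * u) ∂μ) ^ (1 - θ) := by
  have hnonneg : ∀ v, 0 ≤ᵐ[μ] fun l => l * exp (-2 * l * v) := fun v =>
    hμ.mono fun _ hl => mul_nonneg hl (exp_nonneg _)
  rw [integral_congr_ae (hμ.mono fun l hl => mul_exp_neg_convex_comb_eq hl t u)]
  exact integral_rpow_mul_rpow_le (hnonneg t) (hnonneg u) (integrable_mul_exp_neg hμ hi ht)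
    (integrable_mul_exp_neg hμ hi hu) hθ₀ (sub_nonneg.2 hθ₁) (by ring)

end SpectralEnergy

theorem tendsto_mul_exp_rpow_div_mul_rpow_one_sub_div {C : ℝ} (hC : 0 < C) (α s b : ℝ) :
    Tendsto (fun t => (C * exp (-2 * α * t)) ^ (s / t) * b ^ (1 - s / t)) atTop
      (𝓝 (exp (-2 * α * s) * b)) := by
  have hθ : Tendsto (fun t : ℝ => s / t) atTop (𝓝 0) := tendsto_const_nhds.div_atTop tendsto_id
  have hC' : Tendsto (fun t : ℝ => C ^ (s / t)) atTop (𝓝 1) := by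
    simpa [Function.comp_def] using (continuousAt_const_rpow hC.ne').tendsto.comp hθ
  have hb : Tendsto (fun t : ℝ => b ^ (1 - s / t)) atTop (𝓝 b) := by
    have h1 : Tendsto (fun t : ℝ => 1 - s / t) atTop (𝓝 1) := by
      simpa using (tendsto_const_nhds (x := (1 : ℝ))).sub hθ
    simpa [Function.comp_def] using (continuousAt_const_rpow' one_ne_zero).tendsto.comp h1
  have hlim := (hC'.mul_const (exp (-2 * α * s))).mul hb
  rw [one_mul] at hlim
  refine hlim.congr' ?_
  filter_upwards [eventually_gt_atTop 0] with t ht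
  rw [mul_rpow hC.le (exp_nonneg _), ← exp_mul]
  field_simp

theorem stmt_4_general (μ : Measure ℝ) (hsupp : μ (Set.Iio 0) = 0)
    (G : ℝ → ℝ) (hG : ∀ s, G s = ∫ l, l * Real.exp (-2 * l * s) ∂μ)
    (hG0 : Integrable (fun l : ℝ => l) μ)
    (C α : ℝ) (hC : 0 < C)
    (hdecay : ∀ t : ℝ, 0 ≤ t → G t ≤ C * Real.exp (-2 * α * t)) :
    ∀ s : ℝ, 0 ≤ s → G s ≤ Real.exp (-2 * α * s) * G 0 := by
  have hμ : ∀ᵐ l ∂μ, 0 ≤ l := ae_iff.2 (measure_mono_null (fun _ => lt_of_not_ge) hsupp)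
  have hG_nonneg : ∀ t, 0 ≤ G t := fun t => (hG t).symm ▸ integral_mul_exp_neg_nonneg hμ t
  intro s hs
  refine ge_of_tendsto (tendsto_mul_exp_rpow_div_mul_rpow_one_sub_div hC α s (G 0)) ?_
  filter_upwards [eventually_gt_atTop 0, eventually_ge_atTop s] with t ht hst
  have hs_comb : s / t * t + (1 - s / t) * 0 = s := by
    rw [mul_zero, add_zero, div_mul_cancel₀ s ht.ne']
  calc G s = ∫ l, l * exp (-2 * l * (s / t * t + (1 - s / t) * 0)) ∂μ := by rw [hs_comb, hG]
    _ ≤ G t ^ (s / t) * G 0 ^ (1 - s / t) := by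
      rw [hG t, hG 0]
      exact integral_mul_exp_neg_convex_comb_le hμ hG0 (by positivity) ((div_le_one ht).2 hst) ht.le
        le_rfl
    _ ≤ (C * exp (-2 * α * t)) ^ (s / t) * G 0 ^ (1 - s / t) :=
      mul_le_mul_of_nonneg_right (rpow_le_rpow (hG_nonneg t) (hdecay t ht.le) (by positivity))
        (rpow_nonneg (hG_nonneg 0) _)

theorem stmt_4 (μ : Measure ℝ) [IsFiniteMeasure μ] (hsupp : μ (Set.Iio 0) = 0)
    (G : ℝ → ℝ) (hG : ∀ s, G s = ∫ l, l * Real.exp (-2 * l * s) ∂μ)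
    (hG0 : Integrable (fun l : ℝ => l) μ)
    (C α : ℝ) (hC : 0 < C) (hα : 0 < α)
    (hdecay : ∀ t : ℝ, 0 ≤ t → G t ≤ C * Real.exp (-2 * α * t)) :
    ∀ s : ℝ, 0 ≤ s → G s ≤ Real.exp (-2 * α * s) * G 0 :=
  stmt_4_general μ hsupp G hG hG0 C α hC hdecay
end

section
/- Let ρ0 > 0, ρ⁻ ≥ 0, κ ≥ 0, ρ2 > 0 and let t0 = min(1/ρ0, 1/ρ⁻) (interpreted as 1/ρ0 if ρ⁻ = 0). Suppose P ≥ (2/((1/2 + κ/ρ2 + ρ⁻ t)√t)) · m · min( min(ρ0 t/8, 1/4)·ln(1/m), 1/2 ) for all t ∈ (0, t0], where 0 < m ≤ 1/2. Then P ≥ (ln 2 / (4(3 + 2κ/ρ2))) · min(√ρ0, ρ0/√ρ⁻) · m · (ln(1/m))^{1/2}, where min(√ρ0, ρ0/√ρ⁻) is interpreted as √ρ0 when ρ⁻ = 0. -/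
/-!
Write `L = log (1/m) ≥ log 2`. Since `ρ⁻ t ≤ ρ⁻ t0 ≤ 1`, the denominator `1/2 + κ/ρ2 + ρ⁻ t` is at
most `(3 + 2κ/ρ2)/2` on `(0, t0]`, and `ρ0 · √t0` is exactly `min (√ρ0, ρ0/√ρ⁻)`. If `L ≤ 4` the
hypothesis at `t = t0` gives `P ≥ ρ0 √t0 · m · L / (2 (3 + 2κ/ρ2))`, and `L ≥ (log 2 / 2) √L`
because `√L ≥ √(log 2) ≥ log 2`. If `L > 4` the choice `t = 4 t0 / L` makes the inner minimum
`ρ0 t0 / 2` while `√t = 2 √t0 / √L`, which gives `P ≥ ρ0 √t0 · m · √L / (3 + 2κ/ρ2)`.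
-/

open Real

noncomputable def timeScale (ρ0 ρm : ℝ) : ℝ :=
  if ρm = 0 then 1 / ρ0 else min (1 / ρ0) (1 / ρm)

section timeScale

variable {ρ0 ρm : ℝ}

lemma timeScale_pos (hρ0 : 0 < ρ0) (hρm : 0 ≤ ρm) : 0 < timeScale ρ0 ρm := by
  unfold timeScale
  split_ifs with h
  · positivity
  · have : 0 < ρm := lt_of_le_of_ne hρm (Ne.symm h)
    positivity

lemma mul_timeScale_le_one_left (hρ0 : 0 < ρ0) : ρ0 * timeScale ρ0 ρm ≤ 1 := by
  have : timeScale ρ0 ρm ≤ 1 / ρ0 := by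
    unfold timeScale; split_ifs
    exacts [le_rfl, min_le_left _ _]
  calc ρ0 * timeScale ρ0 ρm ≤ ρ0 * (1 / ρ0) := by gcongr
    _ = 1 := mul_one_div_cancel hρ0.ne'

lemma mul_timeScale_le_one_right (hρm : 0 ≤ ρm) : ρm * timeScale ρ0 ρm ≤ 1 := by
  rcases hρm.eq_or_lt with rfl | hρm
  · simp
  have : timeScale ρ0 ρm ≤ 1 / ρm := by
    rw [timeScale, if_neg hρm.ne']; exact min_le_right _ _
  calc ρm * timeScale ρ0 ρm ≤ ρm * (1 / ρm) := by gcongr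
    _ = 1 := mul_one_div_cancel hρm.ne'

lemma mul_sqrt_timeScale (hρ0 : 0 ≤ ρ0) :
    ρ0 * √(timeScale ρ0 ρm)
      = if ρm = 0 then √ρ0 else min (√ρ0) (ρ0 / √ρm) := by
  have mul_sqrt_one_div (x : ℝ) : ρ0 * √(1 / x) = ρ0 / √x := by
    rw [one_div, sqrt_inv, div_eq_mul_inv]
  unfold timeScale
  split_ifs
  · rw [mul_sqrt_one_div, div_sqrt]
  · rw [sqrt_monotone.map_min, mul_min_of_nonneg _ _ hρ0, mul_sqrt_one_div, mul_sqrt_one_div, div_sqrt]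

end timeScale

section bound

variable {ρ0 ρm k L m P t0 : ℝ}

lemma le_of_bound_at (hk : 0 ≤ k) (hρm : 0 ≤ ρm) (hρmt0 : ρm * t0 ≤ 1) {t M : ℝ}
    (ht : 0 < t) (htt0 : t ≤ t0) (hM : 0 ≤ M) (hm : 0 < m)
    (hP : P ≥ 2 / ((1 / 2 + k + ρm * t) * √t) * m * M) :
    4 * m * M / ((3 + 2 * k) * √t) ≤ P := by
  have hden : 1 / 2 + k + ρm * t ≤ (3 + 2 * k) / 2 := by
    nlinarith [mul_le_mul_of_nonneg_left htt0 hρm]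
  have hst : 0 < √t := sqrt_pos.mpr ht
  calc 4 * m * M / ((3 + 2 * k) * √t) = 2 / ((3 + 2 * k) / 2 * √t) * m * M := by
        field_simp; ring
    _ ≤ 2 / ((1 / 2 + k + ρm * t) * √t) * m * M := by
        gcongr
    _ ≤ P := hP

lemma le_of_forall_bound (hρ0 : 0 ≤ ρ0) (hρm : 0 ≤ ρm) (hk : 0 ≤ k) (hm : 0 < m)
    (ht0 : 0 < t0) (hρ0t0 : ρ0 * t0 ≤ 1) (hρmt0 : ρm * t0 ≤ 1) (hL : log 2 ≤ L)
    (hP : ∀ t : ℝ, 0 < t → t ≤ t0 →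
      P ≥ 2 / ((1 / 2 + k + ρm * t) * √t) * m * min (min (ρ0 * t / 8) (1 / 4) * L) (1 / 2)) :
    log 2 / (4 * (3 + 2 * k)) * (ρ0 * √t0) * m * √L ≤ P := by
  have hlog2 : 0 < log 2 := log_pos one_lt_two
  have hL0 : 0 < L := hlog2.trans_le hL
  have hD : 0 < 3 + 2 * k := by linarith
  have hs0 : 0 < √t0 := sqrt_pos.mpr ht0
  have hsL : 0 < √L := sqrt_pos.mpr hL0
  have hs0sq : √t0 ^ 2 = t0 := sq_sqrt ht0.le
  have hsLsq : √L ^ 2 = L := sq_sqrt hL0.le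
  have hρ0s : 0 ≤ ρ0 * √t0 * m := by positivity
  rcases le_or_gt L 4 with hL4 | hL4
  · have hmin : min (min (ρ0 * t0 / 8) (1 / 4) * L) (1 / 2) = ρ0 * t0 / 8 * L := by
      rw [min_eq_left (show ρ0 * t0 / 8 ≤ 1 / 4 by linarith), min_eq_left (by nlinarith)]
    have hP0 := le_of_bound_at hk hρm hρmt0 ht0 le_rfl (by positivity) hm (hP t0 ht0 le_rfl)
    rw [hmin] at hP0
    have hlog2_le : log 2 / 2 ≤ √L := by
      have := log_two_lt_d9
      nlinarith [sqrt_le_sqrt hL]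
    calc log 2 / (4 * (3 + 2 * k)) * (ρ0 * √t0) * m * √L
        = ρ0 * √t0 * m * (√L * (log 2 / 2)) / (2 * (3 + 2 * k)) := by
          field_simp; ring
      _ ≤ ρ0 * √t0 * m * (√L * √L) / (2 * (3 + 2 * k)) := by gcongr
      _ = 4 * m * (ρ0 * t0 / 8 * L) / ((3 + 2 * k) * √t0) := by
        field_simp; rw [hs0sq, hsLsq]; ring
      _ ≤ P := hP0
  · set t := 4 * t0 / L with ht_def
    have ht : 0 < t := by positivity
    have htt0 : t ≤ t0 := by rw [div_le_iff₀ hL0]; nlinarith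
    have hmin : min (min (ρ0 * t / 8) (1 / 4) * L) (1 / 2) = ρ0 * t0 / 2 := by
      have : ρ0 * t ≤ 1 := (mul_le_mul_of_nonneg_left htt0 hρ0).trans hρ0t0
      rw [min_eq_left (show ρ0 * t / 8 ≤ 1 / 4 by linarith),
        show ρ0 * t / 8 * L = ρ0 * t0 / 2 by rw [ht_def]; field_simp; ring, min_eq_left (by linarith)]
    have hst : √t = 2 * √t0 / √L := by
      rw [show t = (2 * √t0 / √L) ^ 2 by rw [ht_def, div_pow, mul_pow, hs0sq, hsLsq]; norm_num]
      exact sqrt_sq (by positivity)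
    have hPt := le_of_bound_at hk hρm hρmt0 ht htt0 (by positivity) hm (hP t ht htt0)
    rw [hmin, hst] at hPt
    calc log 2 / (4 * (3 + 2 * k)) * (ρ0 * √t0) * m * √L
        = ρ0 * √t0 * m * √L * (log 2 / 4) / (3 + 2 * k) := by
          field_simp
      _ ≤ ρ0 * √t0 * m * √L * 1 / (3 + 2 * k) := by
        gcongr
        linarith [log_two_lt_d9]
      _ = 4 * m * (ρ0 * t0 / 2) / ((3 + 2 * k) * (2 * √t0 / √L)) := by
        field_simp; rw [hs0sq]; ring
      _ ≤ P := hPt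

end bound

theorem stmt_14 (ρ0 ρm κ ρ2 P m : ℝ)
    (hρ0 : 0 < ρ0) (hρm : 0 ≤ ρm) (hκ : 0 ≤ κ) (hρ2 : 0 < ρ2)
    (t0 : ℝ) (ht0 : t0 = if ρm = 0 then 1 / ρ0 else min (1 / ρ0) (1 / ρm))
    (hm : 0 < m) (hm12 : m ≤ 1 / 2)
    (hP : ∀ t : ℝ, 0 < t → t ≤ t0 →
      P ≥ (2 / ((1 / 2 + κ / ρ2 + ρm * t) * Real.sqrt t)) * m
        * min (min (ρ0 * t / 8) (1 / 4) * Real.log (1 / m)) (1 / 2)) :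
    P ≥ (Real.log 2 / (4 * (3 + 2 * κ / ρ2)))
      * (if ρm = 0 then Real.sqrt ρ0 else min (Real.sqrt ρ0) (ρ0 / Real.sqrt ρm))
      * m * Real.sqrt (Real.log (1 / m)) := by
  replace ht0 : t0 = timeScale ρ0 ρm := ht0
  have hL : log 2 ≤ log (1 / m) :=
    log_le_log two_pos (by rw [le_div_iff₀ hm]; linarith)
  rw [ge_iff_le, ← mul_sqrt_timeScale hρ0.le, ← ht0, mul_div_assoc]
  subst ht0
  exact le_of_forall_bound hρ0.le hρm (div_nonneg hκ hρ2.le) hm (timeScale_pos hρ0 hρm)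
    (mul_timeScale_le_one_left hρ0) (mul_timeScale_le_one_right hρm) hL hP
end

section
/- Let t > 0 and let f be a positive measurable function with 2^{-n}-th powers well-defined. If for each n ≥ 1 a Markov operator P satisfies P(f^{2^{-n}})(x) ≤ (P f (y))^{2^{-n}} exp(C/(2^n - 1)) for a constant C ≥ 0, and inf f > 0, f bounded, then P(ln f)(x) ≤ ln(P f (y)) + C, using P(ln f) = lim_{n→∞} P((f^{2^{-n}} - 1)/2^{-n}) and lim_{n→∞} (a^{2^{-n}} - 1)/2^{-n} = ln a for a > 0. -/
/-!
Put `h = 2⁻ⁿ`. Since `C / (2ⁿ - 1) = h · C / (1 - h)`, the Harnack inequality reads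
`P (f ^ h) x ≤ exp (h u_h)` with `u_h = log (P f y) + C / (1 - h)`. By affinity of `P` the
difference quotients `(P (f ^ h) x - 1) / h` converge to `P (log f) x`, and by
`exp s - 1 ≤ s exp s` they are bounded by `u_h exp (h u_h) → log (P f y) + C`.
-/

open Filter Topology

namespace Real

theorem exp_sub_one_le_mul_exp (s : ℝ) : exp s - 1 ≤ s * exp s := by
  have h := one_sub_le_exp_neg s
  rw [exp_neg] at h
  have hs := exp_pos s
  calc exp s - 1 = (1 - (exp s)⁻¹) * exp s := by field_simp
    _ ≤ s * exp s := by gcongr; linarith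

theorem exp_mul_sub_one_div_le {h : ℝ} (hh : 0 < h) (u : ℝ) :
    (exp (h * u) - 1) / h ≤ u * exp (h * u) := by
  rw [div_le_iff₀ hh]
  linarith [exp_sub_one_le_mul_exp (h * u)]

theorem rpow_mul_exp_mul {a : ℝ} (ha : 0 < a) (h b : ℝ) :
    a ^ h * exp (h * b) = exp (h * (log a + b)) := by
  rw [rpow_def_of_pos ha, ← exp_add]
  ring_nf

theorem le_of_tendsto_sub_one_div_of_le_exp {ι : Type*} {l : Filter ι} [l.NeBot]
    {h u p : ι → ℝ} {ℓ L : ℝ} (hh : Tendsto h l (𝓝 0)) (hpos : ∀ᶠ i in l, 0 < h i)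
    (hu : Tendsto u l (𝓝 L)) (hp : Tendsto (fun i => (p i - 1) / h i) l (𝓝 ℓ))
    (hle : ∀ᶠ i in l, p i ≤ exp (h i * u i)) : ℓ ≤ L := by
  have hbound : Tendsto (fun i => u i * exp (h i * u i)) l (𝓝 L) := by
    have hexp : Tendsto (fun i => exp (h i * u i)) l (𝓝 1) :=
      tendsto_exp_nhds_zero_nhds_one.comp (by simpa using hh.mul hu)
    simpa using hu.mul hexp
  refine le_of_tendsto_of_tendsto hp hbound ?_
  filter_upwards [hpos, hle] with i hi hpi
  calc (p i - 1) / h i ≤ (exp (h i * u i) - 1) / h i := by gcongr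
    _ ≤ u i * exp (h i * u i) := exp_mul_sub_one_div_le hi (u i)

end Real

theorem div_inv_sub_one {h : ℝ} (hh : h ≠ 0) (C : ℝ) :
    C / (h⁻¹ - 1) = h * (C / (1 - h)) := by
  rcases eq_or_ne h 1 with rfl | h1
  · simp
  have : 1 - h ≠ 0 := sub_ne_zero.mpr (Ne.symm h1)
  rw [show h⁻¹ - 1 = (1 - h) / h by field_simp]
  field_simp

theorem two_pow_eq_inv_two_rpow_neg (n : ℕ) :
    (2 : ℝ) ^ n = ((2 : ℝ) ^ (-(n : ℝ)))⁻¹ := by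
  rw [Real.rpow_neg zero_le_two, inv_inv, Real.rpow_natCast]

theorem tendsto_two_rpow_neg_natCast :
    Tendsto (fun n : ℕ => (2 : ℝ) ^ (-(n : ℝ))) atTop (𝓝 0) :=
  (tendsto_pow_atTop_nhds_zero_of_lt_one (by norm_num) one_half_lt_one).congr fun n => by
    rw [Real.rpow_neg zero_le_two, Real.rpow_natCast, one_div, inv_pow]

theorem stmt_19_general {M : Type*} (P : (M → ℝ) → (M → ℝ))
    (f : M → ℝ)
    (x y : M) (C : ℝ)
    (hPfy : 0 < P f y)
    -- Wang's Harnack inequality applied to exponents 2^{-n}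
    (hHarnack : ∀ n : ℕ, 1 ≤ n →
      P (fun z => f z ^ ((2 : ℝ) ^ (-(n : ℝ)))) x
        ≤ (P f y) ^ ((2 : ℝ) ^ (-(n : ℝ))) * Real.exp (C / (2 ^ n - 1)))
    -- P is affine: P((g - c)/h) = (P g - c)/h
    (haffine : ∀ (g : M → ℝ) (c h : ℝ), h ≠ 0 →
      P (fun z => (g z - c) / h) x = (P g x - c) / h)
    -- P(ln f) = lim_{n→∞} P((f^{2^{-n}} - 1)/2^{-n}) (dominated convergence)
    (hlim : Tendsto
      (fun n : ℕ => P (fun z => (f z ^ ((2 : ℝ) ^ (-(n : ℝ))) - 1) / (2 : ℝ) ^ (-(n : ℝ))) x)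
      atTop (nhds (P (fun z => Real.log (f z)) x))) :
    P (fun z => Real.log (f z)) x ≤ Real.log (P f y) + C := by
  set h : ℕ → ℝ := fun n => (2 : ℝ) ^ (-(n : ℝ))
  have hpos (n : ℕ) : 0 < h n := Real.rpow_pos_of_pos two_pos _
  have hh : Tendsto h atTop (𝓝 0) := tendsto_two_rpow_neg_natCast
  have hu : Tendsto (fun n => Real.log (P f y) + C / (1 - h n)) atTop
      (𝓝 (Real.log (P f y) + C)) := by
    simpa using tendsto_const_nhds.add (tendsto_const_nhds.div (tendsto_const_nhds.sub hh)
      (by norm_num : (1 : ℝ) - 0 ≠ 0))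
  refine Real.le_of_tendsto_sub_one_div_of_le_exp (p := fun n => P (fun z => f z ^ h n) x)
    hh (.of_forall hpos) hu ?_ ?_
  · exact hlim.congr fun n => haffine _ 1 _ (hpos n).ne'
  · filter_upwards [eventually_ge_atTop 1] with n hn
    rw [← Real.rpow_mul_exp_mul hPfy, ← div_inv_sub_one (hpos n).ne',
      ← two_pow_eq_inv_two_rpow_neg]
    exact hHarnack n hn

theorem stmt_19 {M : Type*} (P : (M → ℝ) → (M → ℝ))
    (f : M → ℝ) (hfpos : ∃ ε > 0, ∀ z, ε ≤ f z) (hfbdd : ∃ B, ∀ z, f z ≤ B)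
    (x y : M) (C : ℝ) (hC : 0 ≤ C)
    (hPfy : 0 < P f y)
    -- Wang's Harnack inequality applied to exponents 2^{-n}
    (hHarnack : ∀ n : ℕ, 1 ≤ n →
      P (fun z => f z ^ ((2 : ℝ) ^ (-(n : ℝ)))) x
        ≤ (P f y) ^ ((2 : ℝ) ^ (-(n : ℝ))) * Real.exp (C / (2 ^ n - 1)))
    -- P is affine: P((g - c)/h) = (P g - c)/h
    (haffine : ∀ (g : M → ℝ) (c h : ℝ), h ≠ 0 →
      P (fun z => (g z - c) / h) x = (P g x - c) / h)
    -- P(ln f) = lim_{n→∞} P((f^{2^{-n}} - 1)/2^{-n}) (dominated convergence)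
    (hlim : Tendsto
      (fun n : ℕ => P (fun z => (f z ^ ((2 : ℝ) ^ (-(n : ℝ))) - 1) / (2 : ℝ) ^ (-(n : ℝ))) x)
      atTop (nhds (P (fun z => Real.log (f z)) x))) :
    P (fun z => Real.log (f z)) x ≤ Real.log (P f y) + C :=
  stmt_19_general P f x y C hPfy hHarnack haffine hlim
end
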